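/- Let D be a symmetric operator on a dense domain in a Hilbert space H satisfying ‖Dσ‖² = ‖∇σ‖² + ⟨Rσ, σ⟩, where R is a self-adjoint bounded operator. Suppose there are constants k₀ > 0 and k₁ ≥ 0 and an orthogonal projection P_K such that ⟨Rσ, σ⟩ ≥ k₀‖σ‖² − (k₀+k₁)‖P_K σ‖². Then every eigenvector σ of D with eigenvalue λ satisfying λ² < k₀ obeys (k₀ − λ²)/(k₀ + k₁) ≤ ‖P_K σ‖²/‖σ‖² (for σ ≠ 0). -/
import Mathlib


local notation "⟪" x ", " y "⟫" => @inner ℂ _ _ x y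

/-- Eigenvectors of a Dirac-type operator with small eigenvalue concentrate on the compact
set: if `‖Dσ‖² = ‖∇σ‖² + ⟨Rσ, σ⟩` and `⟨Rσ, σ⟩ ≥ k₀‖σ‖² − (k₀+k₁)‖P_K σ‖²`, then any
eigenvector `σ ≠ 0` with `Dσ = λσ` and `λ² < k₀` satisfies
`(k₀ − λ²)/(k₀+k₁) ≤ ‖P_K σ‖²/‖σ‖²`. -/
theorem eigenvector_concentration
    {H H₁ : Type*} [NormedAddCommGroup H] [InnerProductSpace ℂ H] [CompleteSpace H]
    [NormedAddCommGroup H₁] [InnerProductSpace ℂ H₁] [CompleteSpace H₁]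
    (dom : Submodule ℂ H) (hdense : Dense (dom : Set H))
    (D : dom →ₗ[ℂ] H) (Grad : dom →ₗ[ℂ] H₁)
    (hsymm : ∀ σ τ : dom, ⟪D σ, (τ : H)⟫ = ⟪(σ : H), D τ⟫)
    (R : H →L[ℂ] H) (hR : IsSelfAdjoint R)
    (P : H →L[ℂ] H) (hPproj : IsIdempotentElem P) (hPsa : IsSelfAdjoint P)
    (hBochner : ∀ σ : dom, ‖D σ‖ ^ 2 = ‖Grad σ‖ ^ 2 + (⟪R σ, (σ : H)⟫).re)
    (k₀ k₁ : ℝ) (hk₀ : 0 < k₀) (hk₁ : 0 ≤ k₁)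
    (hcurv : ∀ σ : H, k₀ * ‖σ‖ ^ 2 - (k₀ + k₁) * ‖P σ‖ ^ 2 ≤ (⟪R σ, σ⟫).re)
    (σ : dom) (hσ : (σ : H) ≠ 0) (lam : ℝ) (heig : D σ = lam • (σ : H))
    (hlam : lam ^ 2 < k₀) :
    (k₀ - lam ^ 2) / (k₀ + k₁) ≤ ‖P (σ : H)‖ ^ 2 / ‖(σ : H)‖ ^ 2 := by
  have hB := hBochner σ
  have hc := hcurv (σ : H)
  have hD : ‖D σ‖ ^ 2 = lam ^ 2 * ‖(σ : H)‖ ^ 2 := by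
    rw [heig, norm_smul]
    simp [mul_pow, sq_abs]
  have hgrad : (0:ℝ) ≤ ‖Grad σ‖ ^ 2 := sq_nonneg _
  have key : (k₀ - lam ^ 2) * ‖(σ : H)‖ ^ 2 ≤ (k₀ + k₁) * ‖P (σ : H)‖ ^ 2 := by
    nlinarith
  have hσpos : 0 < ‖(σ : H)‖ ^ 2 := pow_pos (norm_pos_iff.mpr hσ) 2
  have hkpos : 0 < k₀ + k₁ := by linarith
  rw [div_le_div_iff₀ hkpos hσpos]
  linarith [key]
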